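/- arXiv:2302.12302 — 2 statements merged into one kernel-verified Lean document; each statement's English description precedes it below -/
import Mathlib

section
/- Let n = Σ_{i=1}^{r} 2^{n_i} with n_1 > n_2 > ⋯ > n_r ≥ 0, and set n^{(A)} = Σ_{i=A+1}^{r} 2^{n_i}. Then n·K_n = Σ_{A=1}^{r} (Π_{j=1}^{A−1} w_{2^{n_j}}) · (2^{n_A} K_{2^{n_A}} + n^{(A)} D_{2^{n_A}}). -/
open MeasureTheory Finset

/-- The Walsh group `G = (ℤ/2)^ℕ`. -/
abbrev G : Type := ℕ → ZMod 2

instance : TopologicalSpace (ZMod 2) := ⊥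
instance : DiscreteTopology (ZMod 2) := ⟨rfl⟩
noncomputable instance : MeasurableSpace G := borel G
instance : BorelSpace G := ⟨rfl⟩

/-- The normalized Haar measure on `G`. -/
noncomputable def μ : Measure G :=
  Measure.addHaarMeasure (⊤ : TopologicalSpace.PositiveCompacts G)

/-- Rademacher functions. -/
noncomputable def rad (k : ℕ) (x : G) : ℝ := (-1 : ℝ) ^ (x k).val

/-- Walsh–Paley functions. -/
noncomputable def walsh (n : ℕ) (x : G) : ℝ :=
  ∏ k ∈ Finset.range n, rad k x ^ (n.testBit k).toNat

/-- Walsh–Dirichlet kernels `D_n = ∑_{k<n} w_k`. -/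
noncomputable def dirichlet (n : ℕ) (x : G) : ℝ := ∑ k ∈ Finset.range n, walsh k x

/-- Walsh–Fejér kernels `K_n = (1/n) ∑_{k=1}^n D_k`. -/
noncomputable def fejer (n : ℕ) (x : G) : ℝ :=
  (1 / (n : ℝ)) * ∑ k ∈ Finset.range n, dirichlet (k + 1) x

/-- The cylinder `I_n(x) = {y : y_j = x_j for j < n}`. -/
def cyl (n : ℕ) (x : G) : Set G := {y | ∀ j < n, y j = x j}

/-- `I_n = I_n(0)`. -/
def I (n : ℕ) : Set G := cyl n 0

/-- `e_k` has a `1` in coordinate `k` and `0` elsewhere. -/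
def e (k : ℕ) : G := fun j => if j = k then 1 else 0

/-- Walsh–Fourier coefficients. -/
noncomputable def fcoef (f : G → ℝ) (n : ℕ) : ℝ := ∫ x, f x * walsh n x ∂μ

/-- Walsh partial sums. -/
noncomputable def partialSum (f : G → ℝ) (n : ℕ) (x : G) : ℝ :=
  ∑ k ∈ Finset.range n, fcoef f k * walsh k x

/-- Fejér means `σ_n f = (1/n) ∑_{k=1}^n S_k f`. -/
noncomputable def fejerMean (f : G → ℝ) (n : ℕ) (x : G) : ℝ :=
  (1 / (n : ℝ)) * ∑ k ∈ Finset.range n, partialSum f (k + 1) x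

/-!
For `k < 2^p` the binary digits of `2^p + k` are those of `k` together with digit `p`, so
`w_{2^p + k} = w_{2^p} w_k`. Hence `D_{2^p + q} = D_{2^p} + w_{2^p} D_q` for `q ≤ 2^p`, and summing,
`(2^p + q) K_{2^p + q} = 2^p K_{2^p} + q D_{2^p} + w_{2^p} · q K_q`. As `∑_{i ≥ 2} 2^{n_i} < 2^{n_1}`,
this recursion can be unrolled along the binary expansion of `n`.
-/

lemma walsh_eq_prod_range_of_le {n N : ℕ} (hn : n ≤ N) (x : G) :
    walsh n x = ∏ k ∈ range N, rad k x ^ (n.testBit k).toNat := by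
  rw [← prod_range_mul_prod_Ico _ hn, prod_eq_one (s := Ico n N) fun k hk => ?_, mul_one, walsh]
  rw [Nat.testBit_lt_two_pow ((mem_Ico.mp hk).1.trans_lt k.lt_two_pow_self)]
  rfl

lemma Nat.testBit_two_pow_add_toNat {p k : ℕ} (hk : k < 2 ^ p) (j : ℕ) :
    ((2 ^ p + k).testBit j).toNat = ((2 ^ p).testBit j).toNat + (k.testBit j).toNat := by
  rcases lt_trichotomy j p with h | rfl | h
  · simp [Nat.testBit_two_pow_add_gt h, Nat.testBit_two_pow_of_ne h.ne']
  · simp [Nat.testBit_two_pow_add_eq, Nat.testBit_lt_two_pow hk]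
  · have hk' : k < 2 ^ j := hk.trans (Nat.pow_lt_pow_right one_lt_two h)
    have hsum : 2 ^ p + k < 2 ^ j := by
      have := Nat.pow_le_pow_right two_pos h
      rw [pow_succ] at this
      omega
    simp [Nat.testBit_lt_two_pow hsum, Nat.testBit_lt_two_pow hk', Nat.testBit_two_pow_of_ne h.ne]

lemma walsh_two_pow_add {p k : ℕ} (hk : k < 2 ^ p) (x : G) :
    walsh (2 ^ p + k) x = walsh (2 ^ p) x * walsh k x := by
  rw [walsh_eq_prod_range_of_le le_rfl, walsh_eq_prod_range_of_le (Nat.le_add_right _ k),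
    walsh_eq_prod_range_of_le (Nat.le_add_left k _), ← prod_mul_distrib]
  simp_rw [← pow_add, Nat.testBit_two_pow_add_toNat hk]

lemma dirichlet_two_pow_add {p q : ℕ} (hq : q ≤ 2 ^ p) (x : G) :
    dirichlet (2 ^ p + q) x = dirichlet (2 ^ p) x + walsh (2 ^ p) x * dirichlet q x := by
  rw [dirichlet, sum_range_add, dirichlet, dirichlet, mul_sum]
  congr 1
  exact sum_congr rfl fun k hk => walsh_two_pow_add ((mem_range.mp hk).trans_le hq) x

noncomputable def fejerSum (n : ℕ) (x : G) : ℝ := ∑ k ∈ range n, dirichlet (k + 1) x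

lemma natCast_mul_fejer (n : ℕ) (x : G) : (n : ℝ) * fejer n x = fejerSum n x := by
  rcases eq_or_ne n 0 with rfl | hn
  · simp [fejerSum]
  · rw [fejer, fejerSum, ← mul_assoc, mul_one_div_cancel (Nat.cast_ne_zero.mpr hn), one_mul]

lemma fejerSum_two_pow_add {p q : ℕ} (hq : q ≤ 2 ^ p) (x : G) :
    fejerSum (2 ^ p + q) x =
      fejerSum (2 ^ p) x + q * dirichlet (2 ^ p) x + walsh (2 ^ p) x * fejerSum q x := by
  have hD : ∀ k ∈ range q, dirichlet (2 ^ p + k + 1) x =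
      dirichlet (2 ^ p) x + walsh (2 ^ p) x * dirichlet (k + 1) x := fun k hk => by
    rw [add_assoc, dirichlet_two_pow_add ((mem_range.mp hk).trans_le hq) x]
  rw [fejerSum, sum_range_add, sum_congr rfl hD, sum_add_distrib, sum_const, card_range,
    nsmul_eq_mul, ← mul_sum, fejerSum, fejerSum, add_assoc]

lemma sum_two_pow_lt_two_pow {ι : Type*} [Fintype ι] {m : ι → ℕ} (hm : Function.Injective m)
    {p : ℕ} (hp : ∀ i, m i < p) : ∑ i, 2 ^ m i < 2 ^ p := by
  rw [← sum_image fun i _ j _ h => hm h]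
  exact Nat.geomSum_lt le_rfl fun k hk => by
    obtain ⟨i, -, rfl⟩ := mem_image.mp hk
    exact hp i

lemma Fin.prod_Iio_succ {M : Type*} [CommMonoid M] {n : ℕ} (f : Fin (n + 1) → M) (a : Fin n) :
    ∏ i ∈ Iio a.succ, f i = f 0 * ∏ i ∈ Iio a, f i.succ := by
  rw [← filter_gt_eq_Iio, ← filter_gt_eq_Iio, prod_filter, prod_filter, Fin.prod_univ_succ]
  simp [Fin.succ_pos]

lemma fejerSum_sum_two_pow {r : ℕ} {m : Fin r → ℕ} (hm : StrictAnti m) (x : G) :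
    fejerSum (∑ i, 2 ^ m i) x =
      ∑ A, (∏ j ∈ Iio A, walsh (2 ^ m j) x) *
        (fejerSum (2 ^ m A) x + ((∑ i ∈ Ioi A, 2 ^ m i : ℕ) : ℝ) * dirichlet (2 ^ m A) x) := by
  induction r with
  | zero => simp [fejerSum]
  | succ r ih =>
    have hm_succ : StrictAnti fun i : Fin r => m i.succ := hm.comp_strictMono Fin.strictMono_succ
    have htail : ∑ i : Fin r, 2 ^ m i.succ ≤ 2 ^ m 0 :=
      (sum_two_pow_lt_two_pow hm_succ.injective fun i => hm i.succ_pos).le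
    have hIio_zero : Iio (0 : Fin (r + 1)) = ∅ := Iio_eq_empty.mpr fun b _ => b.zero_le
    rw [Fin.sum_univ_succ, fejerSum_two_pow_add htail, ih hm_succ, Fin.sum_univ_succ, mul_sum]
    simp only [Fin.prod_Iio_succ, Fin.sum_Ioi_succ, Fin.sum_Ioi_zero, hIio_zero, prod_empty,
      one_mul, mul_assoc]

/-- the decomposition of `n·K_n` along the binary expansion
`n = ∑_{i=1}^r 2^{n_i}` with `n_1 > ⋯ > n_r`. -/
theorem nK_decomposition (r : ℕ) (m : Fin r → ℕ) (hm : StrictAnti m) (x : G) :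
    ((∑ i, 2 ^ m i : ℕ) : ℝ) * fejer (∑ i, 2 ^ m i) x =
      ∑ A, (∏ j ∈ Finset.univ.filter (· < A), walsh (2 ^ m j) x) *
        ((2 : ℝ) ^ m A * fejer (2 ^ m A) x +
          ((∑ i ∈ Finset.univ.filter (A < ·), 2 ^ m i : ℕ) : ℝ) * dirichlet (2 ^ m A) x) := by
  have h2pow (k : ℕ) : (2 : ℝ) ^ k * fejer (2 ^ k) x = fejerSum (2 ^ k) x := by
    exact_mod_cast natCast_mul_fejer (2 ^ k) x
  simp only [natCast_mul_fejer, fejerSum_sum_two_pow hm, filter_gt_eq_Iio, filter_lt_eq_Ioi, h2pow]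
end

section
/- For 0 ≤ k < l < α, t ∈ I_M with M ≥ l+1, and x ∈ I_{l+1}(e_k + e_l), the dyadic Fejér kernel satisfies K_{2^α}(x + t) = 0. -/
open MeasureTheory Finset

/-!
Doubling the index of a dyadic Dirichlet kernel multiplies it by `1 + r_n`, and
`∑_{j<2^(n+1)} D_{j+1} = (1 + r_n) ∑_{j<2^n} D_{j+1} + 2^n D_{2^n}`.
At `z = x + t` both `r_k z` and `r_l z` equal `-1`. The first kills `D_{2^n}(z)` for all `n > k`;
the second then kills the Fejér sum at `2^(l+1)`, and the recursion keeps it zero up to `2^α`.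
-/

lemma walsh_eq_prod_range {m N : ℕ} (hm : m < 2 ^ N) (z : G) :
    walsh m z = ∏ j ∈ range N, rad j z ^ (m.testBit j).toNat := by
  have hbit : ∀ j, min m N ≤ j → rad j z ^ (m.testBit j).toNat = 1 := fun j hj => by
    have : m < 2 ^ j := by
      rcases min_le_iff.mp hj with h | h
      · exact (Nat.lt_two_pow_self).trans_le (Nat.pow_le_pow_right two_pos h)
      · exact hm.trans_le (Nat.pow_le_pow_right two_pos h)
    simp [Nat.testBit_lt_two_pow this]
  have htrunc : ∀ n, min m N ≤ n → ∏ j ∈ range n, rad j z ^ (m.testBit j).toNat =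
      ∏ j ∈ range (min m N), rad j z ^ (m.testBit j).toNat := fun n hn =>
    (prod_subset (range_subset_range.mpr hn) fun j _ hj =>
      hbit j (by simp only [mem_range, not_lt] at hj; omega)).symm
  rw [walsh, htrunc m (min_le_left m N), htrunc N (min_le_right m N)]

lemma walsh_two_pow_add_s13 {n i : ℕ} (hi : i < 2 ^ n) (z : G) :
    walsh (2 ^ n + i) z = rad n z * walsh i z := by
  have hlt : 2 ^ n + i < 2 ^ (n + 1) := by rw [pow_succ, mul_two]; omega
  have hlow : ∀ j ∈ range n, rad j z ^ ((2 ^ n + i).testBit j).toNat =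
      rad j z ^ (i.testBit j).toNat := fun j hj => by
    rw [Nat.testBit_two_pow_add_gt (mem_range.mp hj)]
  have htop : (2 ^ n + i).testBit n = true := by
    rw [Nat.testBit_two_pow_add_eq, Nat.testBit_lt_two_pow hi, Bool.not_false]
  rw [walsh_eq_prod_range hlt, walsh_eq_prod_range hi, prod_range_succ, prod_congr rfl hlow, htop,
    Bool.toNat_true, pow_one, mul_comm]

lemma dirichlet_two_pow_add_s13 {n m : ℕ} (hm : m ≤ 2 ^ n) (z : G) :
    dirichlet (2 ^ n + m) z = dirichlet (2 ^ n) z + rad n z * dirichlet m z := by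
  rw [dirichlet, dirichlet, dirichlet, sum_range_add, mul_sum]
  congr 1
  exact sum_congr rfl fun i hi => walsh_two_pow_add_s13 ((mem_range.mp hi).trans_le hm) z

lemma dirichlet_two_pow_succ (n : ℕ) (z : G) :
    dirichlet (2 ^ (n + 1)) z = (1 + rad n z) * dirichlet (2 ^ n) z := by
  rw [pow_succ, mul_two, dirichlet_two_pow_add_s13 le_rfl]
  ring

lemma sum_dirichlet_succ_two_pow_succ (n : ℕ) (z : G) :
    ∑ j ∈ range (2 ^ (n + 1)), dirichlet (j + 1) z =
      (1 + rad n z) * ∑ j ∈ range (2 ^ n), dirichlet (j + 1) z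
        + (2 ^ n : ℝ) * dirichlet (2 ^ n) z := by
  have hupper : ∀ i ∈ range (2 ^ n), dirichlet (2 ^ n + i + 1) z =
      dirichlet (2 ^ n) z + rad n z * dirichlet (i + 1) z := fun i hi => by
    rw [add_assoc, dirichlet_two_pow_add_s13 (mem_range.mp hi)]
  rw [pow_succ, mul_two, sum_range_add, sum_congr rfl hupper, sum_add_distrib, ← mul_sum,
    sum_const, card_range, nsmul_eq_mul]
  push_cast
  ring

section VanishingAtNegativeRademacher

variable {z : G} {k l : ℕ}

lemma dirichlet_two_pow_eq_zero (hk : rad k z = -1) {n : ℕ} (hkn : k < n) :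
    dirichlet (2 ^ n) z = 0 := by
  induction n, hkn using Nat.le_induction with
  | base => rw [dirichlet_two_pow_succ, hk, add_neg_cancel, zero_mul]
  | succ n hkn ih => rw [dirichlet_two_pow_succ, ih, mul_zero]

lemma sum_dirichlet_succ_two_pow_eq_zero (hk : rad k z = -1) (hl : rad l z = -1) (hkl : k < l)
    {n : ℕ} (hln : l < n) : ∑ j ∈ range (2 ^ n), dirichlet (j + 1) z = 0 := by
  induction n, hln using Nat.le_induction with
  | base =>
    rw [sum_dirichlet_succ_two_pow_succ, hl, dirichlet_two_pow_eq_zero hk hkl]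
    ring
  | succ n hln ih =>
    rw [sum_dirichlet_succ_two_pow_succ, ih, dirichlet_two_pow_eq_zero hk (hkl.trans hln)]
    ring

lemma fejer_two_pow_eq_zero (hk : rad k z = -1) (hl : rad l z = -1) (hkl : k < l) {n : ℕ}
    (hln : l < n) : fejer (2 ^ n) z = 0 := by
  rw [fejer, sum_dirichlet_succ_two_pow_eq_zero hk hl hkl hln, mul_zero]

end VanishingAtNegativeRademacher

lemma rad_eq_neg_one {z : G} {k : ℕ} (h : z k = 1) : rad k z = -1 := by
  simp [rad, h, ZMod.val_one]

lemma add_e_add_e_apply_left {k l : ℕ} (hkl : k ≠ l) : (e k + e l) k = 1 := by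
  simp [e, hkl]

/-- for `k < l < α`, `t ∈ I_M` (`M ≥ l+1`) and `x ∈ I_{l+1}(e_k+e_l)`,
`K_{2^α}(x+t) = 0`. -/
theorem fejer_dyadic_vanishes (M k l α : ℕ) (h1 : k < l) (h2 : l < α) (h3 : l + 1 ≤ M)
    (t : G) (ht : t ∈ I M) (x : G) (hx : x ∈ cyl (l + 1) (e k + e l)) :
    fejer (2 ^ α) (x + t) = 0 := by
  have hcoord : ∀ j ≤ l, (x + t) j = (e k + e l) j := fun j hj => by
    rw [Pi.add_apply, hx j (by omega), ht j (by omega), Pi.zero_apply, add_zero]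
  have hk : (x + t) k = 1 := by rw [hcoord k h1.le, add_e_add_e_apply_left h1.ne]
  have hl : (x + t) l = 1 := by rw [hcoord l le_rfl, add_comm, add_e_add_e_apply_left h1.ne']
  exact fejer_two_pow_eq_zero (rad_eq_neg_one hk) (rad_eq_neg_one hl) h1 h2
end
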